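/- arXiv:2003.10054 — 2 statements merged into one kernel-verified Lean document; each statement's English description precedes it below -/
import Mathlib

section
/- Let V be a finite-dimensional real vector space, g a real Lie algebra, B : g → g → ℝ an invariant bilinear form (B([ξ,η],ω) + B(η,[ξ,ω]) = 0 for all ξ,η,ω ∈ g), and k, l, p natural numbers. For every alternating k-linear map u, alternating l-linear map v, and alternating p-linear map w from V to g, the identity ⟨[u ∧ v] ∧ w⟩ + (−1)^{kl} ⟨v ∧ [u ∧ w]⟩ = 0 holds as an equality of real-valued alternating (k+l+p)-linear maps on V, with all index types identified with Fin (k+l+p) along the canonical equivalences. -/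
open scoped TensorProduct

/-- The bilinear map `g -> g -> g` given by the Lie bracket. -/
noncomputable def bracketBilin (g : Type*) [LieRing g] [LieAlgebra ℝ g] :
    g →ₗ[ℝ] g →ₗ[ℝ] g :=
  LinearMap.mk₂ ℝ (fun ξ η : g => ⁅ξ, η⁆)
    (fun _ _ _ => add_lie _ _ _)
    (fun _ _ _ => smul_lie _ _ _)
    (fun _ _ _ => lie_add _ _ _)
    (fun _ _ _ => lie_smul _ _ _)

/-- The bracket-wedge `[u ∧ v]` of Lie algebra-valued alternating forms, obtained by
composing the linear map induced by the Lie bracket with the domain coproduct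
`u.domCoprod v`, reindexed from `Fin k ⊕ Fin l` to `Fin (k + l)` along the canonical
equivalence. -/
noncomputable def bwedge {V g : Type*} [AddCommGroup V] [Module ℝ V]
    [LieRing g] [LieAlgebra ℝ g] {k l : ℕ}
    (u : AlternatingMap ℝ V g (Fin k)) (v : AlternatingMap ℝ V g (Fin l)) :
    AlternatingMap ℝ V g (Fin (k + l)) :=
  ((TensorProduct.lift (bracketBilin g)).compAlternatingMap
    (u.domCoprod v)).domDomCongr finSumFinEquiv

/-- The pairing-wedge `⟨u ∧ v⟩` of Lie algebra-valued alternating forms with respect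
to a bilinear form `B`, obtained by composing `B` (viewed as a linear map
`g ⊗ g → ℝ`) with the domain coproduct `u.domCoprod v`, reindexed from
`Fin k ⊕ Fin l` to `Fin (k + l)` along the canonical equivalence. -/
noncomputable def pwedge {V g : Type*} [AddCommGroup V] [Module ℝ V]
    [LieRing g] [LieAlgebra ℝ g] (B : g →ₗ[ℝ] g →ₗ[ℝ] ℝ) {k l : ℕ}
    (u : AlternatingMap ℝ V g (Fin k)) (v : AlternatingMap ℝ V g (Fin l)) :
    AlternatingMap ℝ V ℝ (Fin (k + l)) :=
  ((TensorProduct.lift B).compAlternatingMap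
    (u.domCoprod v)).domDomCongr finSumFinEquiv

/-!
Up to the factorials of `k`, `l`, `p`, each of the two pairings is the alternatization of a
multilinear map on `Fin (k + l + p)`: `x ↦ B ⁅u x₁, v x₂⁆ (w x₃)` and `x ↦ B (v x₂) ⁅u x₁, w x₃⁆`,
where `x₁, x₂, x₃` are the three blocks of arguments. Invariance of `B` says that the second is
minus the first precomposed with the permutation exchanging the `k`-block and the `l`-block, and
alternatization turns that precomposition into multiplication by the sign `(-1) ^ (k * l)`.
-/

open scoped Nat
open Equiv

theorem coe_finRotate_pow {N : ℕ} (n : ℕ) (i : Fin N) :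
    ((finRotate N ^ n) i : ℕ) = (i + n) % N := by
  induction n with
  | zero => simp [Nat.mod_eq_of_lt i.2]
  | succ n ih =>
    have := i.neZero
    rw [pow_succ', Perm.mul_apply, finRotate_apply, Fin.val_add, ih, Fin.val_one',
      Nat.add_mod_mod, Nat.mod_add_mod, add_assoc]

theorem finAddFlip_trans_finCongr_eq_finRotate_pow (m n : ℕ) :
    (finAddFlip.trans (finCongr (Nat.add_comm n m)) : Perm (Fin (m + n))) =
      finRotate (m + n) ^ n := by
  ext i
  rw [coe_finRotate_pow]
  rcases lt_or_ge (i : ℕ) m with h | h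
  · simp only [trans_apply, finAddFlip_apply_mk_left h, finCongr_apply, Fin.cast_mk,
      Nat.mod_eq_of_lt (show (i : ℕ) + n < m + n by omega)]
    omega
  · simp only [trans_apply, finAddFlip_apply_mk_right h i.2, finCongr_apply, Fin.cast_mk,
      Nat.mod_eq_sub_mod (show m + n ≤ i + n by omega),
      Nat.mod_eq_of_lt (show (i : ℕ) + n - (m + n) < m + n by omega)]
    omega

theorem sign_finAddFlip_trans_finCongr (m n : ℕ) :
    Perm.sign (finAddFlip.trans (finCongr (Nat.add_comm n m)) : Perm (Fin (m + n))) =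
      (-1) ^ (m * n) := by
  rw [finAddFlip_trans_finCongr_eq_finRotate_pow, map_pow, sign_finRotate, ← pow_mul]
  rcases n with _ | n
  · simp
  · rw [show (m + (n + 1) - 1) * (n + 1) = m * (n + 1) + n * (n + 1) by
      rw [Nat.add_sub_assoc le_add_self, Nat.add_sub_cancel, add_mul],
      pow_add, Even.neg_one_pow (Nat.even_mul_succ_self n), mul_one]

def finAddLeftComm (k l p : ℕ) : Fin (l + (k + p)) ≃ Fin (k + l + p) :=
  finCongr ((add_left_comm l k p).trans (add_assoc k l p).symm)

/-- Typed as an `Equiv` rather than a `Perm`, so that its simp lemmas match the coercions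
produced by `MultilinearMap.domDomCongr_apply`. -/
def finSwapFirstBlocks (k l p : ℕ) : Fin (k + l + p) ≃ Fin (k + l + p) :=
  finSumFinEquiv.permCongr
    (sumCongr (finAddFlip.trans (finCongr (Nat.add_comm l k))) (Equiv.refl (Fin p)))

section finSwapFirstBlocks

variable {k l p : ℕ}

theorem sign_finSwapFirstBlocks : Perm.sign (finSwapFirstBlocks k l p) = (-1) ^ (k * l) := by
  rw [finSwapFirstBlocks, Perm.sign_permCongr, Perm.sign_sumCongr,
    sign_finAddFlip_trans_finCongr, Perm.sign_refl, mul_one]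

@[simp]
theorem finSwapFirstBlocks_castAdd_castAdd (i : Fin k) :
    finSwapFirstBlocks k l p (Fin.castAdd p (Fin.castAdd l i)) =
      finAddLeftComm k l p (Fin.natAdd l (Fin.castAdd p i)) := by
  ext
  simp [finSwapFirstBlocks, finAddLeftComm, Equiv.permCongr_apply, Nat.add_comm]

@[simp]
theorem finSwapFirstBlocks_castAdd_natAdd (i : Fin l) :
    finSwapFirstBlocks k l p (Fin.castAdd p (Fin.natAdd k i)) =
      finAddLeftComm k l p (Fin.castAdd (k + p) i) := by
  ext
  simp [finSwapFirstBlocks, finAddLeftComm, Equiv.permCongr_apply]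

@[simp]
theorem finSwapFirstBlocks_natAdd (i : Fin p) :
    finSwapFirstBlocks k l p (Fin.natAdd (k + l) i) =
      finAddLeftComm k l p (Fin.natAdd l (Fin.natAdd k i)) := by
  ext
  simp [finSwapFirstBlocks, finAddLeftComm, Equiv.permCongr_apply, Nat.add_comm,
    Nat.add_left_comm]

end finSwapFirstBlocks

namespace MultilinearMap

variable {R M N N₁ N₂ P : Type*} [CommRing R] [AddCommGroup M] [Module R M]
  [AddCommGroup N] [Module R N] [AddCommGroup N₁] [Module R N₁] [AddCommGroup N₂] [Module R N₂]
  [AddCommGroup P] [Module R P] {k l p : ℕ}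

theorem alternatization_domDomCongr {ι ι' : Type*} [Fintype ι] [DecidableEq ι] [Fintype ι']
    [DecidableEq ι'] (e : ι ≃ ι') (m : MultilinearMap R (fun _ : ι => M) N) :
    alternatization (m.domDomCongr e) = (alternatization m).domDomCongr e := by
  ext x
  simp only [AlternatingMap.domDomCongr_apply, alternatization_apply]
  refine (Fintype.sum_equiv e.permCongr _ _ fun π => ?_).symm
  simp [Perm.sign_permCongr, Equiv.permCongr_apply]

def finCoprod (β : N₁ →ₗ[R] N₂ →ₗ[R] N) (m₁ : MultilinearMap R (fun _ : Fin k => M) N₁)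
    (m₂ : MultilinearMap R (fun _ : Fin l => M) N₂) :
    MultilinearMap R (fun _ : Fin (k + l) => M) N :=
  ((TensorProduct.lift β).compMultilinearMap (m₁.domCoprod m₂)).domDomCongr finSumFinEquiv

@[simp]
theorem finCoprod_apply (β : N₁ →ₗ[R] N₂ →ₗ[R] N)
    (m₁ : MultilinearMap R (fun _ : Fin k => M) N₁)
    (m₂ : MultilinearMap R (fun _ : Fin l => M) N₂) (x : Fin (k + l) → M) :
    finCoprod β m₁ m₂ x =
      β (m₁ fun i => x (Fin.castAdd l i)) (m₂ fun i => x (Fin.natAdd k i)) := by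
  simp [finCoprod]

theorem finCoprod_finCoprod_domDomCongr (β : N →ₗ[R] N →ₗ[R] P) (γ : N →ₗ[R] N →ₗ[R] N)
    (hβγ : ∀ ξ η ω, β (γ ξ η) ω + β η (γ ξ ω) = 0)
    (u : MultilinearMap R (fun _ : Fin k => M) N) (v : MultilinearMap R (fun _ : Fin l => M) N)
    (w : MultilinearMap R (fun _ : Fin p => M) N) :
    (finCoprod β v (finCoprod γ u w)).domDomCongr (finAddLeftComm k l p) =
      -(finCoprod β (finCoprod γ u v) w).domDomCongr (finSwapFirstBlocks k l p) := by
  ext (x : Fin (k + l + p) → M)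
  simp only [domDomCongr_apply, _root_.neg_apply, finCoprod_apply,
    finSwapFirstBlocks_castAdd_castAdd, finSwapFirstBlocks_castAdd_natAdd, finSwapFirstBlocks_natAdd]
  exact (neg_eq_of_add_eq_zero_right (hβγ _ _ _)).symm

end MultilinearMap

namespace AlternatingMap

section CommRing

variable {R M N N₁ N₂ : Type*} [CommRing R] [AddCommGroup M] [Module R M]
  [AddCommGroup N] [Module R N] [AddCommGroup N₁] [Module R N₁] [AddCommGroup N₂] [Module R N₂]
  {k l : ℕ} (β : N₁ →ₗ[R] N₂ →ₗ[R] N)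

noncomputable def finCoprod (a : M [⋀^Fin k]→ₗ[R] N₁) (b : M [⋀^Fin l]→ₗ[R] N₂) :
    M [⋀^Fin (k + l)]→ₗ[R] N :=
  ((TensorProduct.lift β).compAlternatingMap (a.domCoprod b)).domDomCongr finSumFinEquiv

theorem finCoprod_smul_smul (s t : R) (a : M [⋀^Fin k]→ₗ[R] N₁) (b : M [⋀^Fin l]→ₗ[R] N₂) :
    finCoprod β (s • a) (t • b) = (s * t) • finCoprod β a b := by
  rw [finCoprod, ← domCoprod'_apply, TensorProduct.smul_tmul_smul, LinearMap.map_smul,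
    LinearMap.compAlternatingMap_smul, domDomCongr_smul, domCoprod'_apply, finCoprod]

theorem finCoprod_alternatization (m₁ : MultilinearMap R (fun _ : Fin k => M) N₁)
    (m₂ : MultilinearMap R (fun _ : Fin l => M) N₂) :
    finCoprod β (MultilinearMap.alternatization m₁) (MultilinearMap.alternatization m₂) =
      MultilinearMap.alternatization (MultilinearMap.finCoprod β m₁ m₂) := by
  rw [finCoprod, MultilinearMap.finCoprod, MultilinearMap.alternatization_domDomCongr,
    LinearMap.compMultilinearMap_alternatization, MultilinearMap.domCoprod_alternization]

end CommRing

section CharZero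

variable {𝕜 M N N₁ N₂ N₃ N₄ : Type*} [Field 𝕜] [CharZero 𝕜] [AddCommGroup M] [Module 𝕜 M]
  [AddCommGroup N] [Module 𝕜 N] [AddCommGroup N₁] [Module 𝕜 N₁] [AddCommGroup N₂] [Module 𝕜 N₂]
  [AddCommGroup N₃] [Module 𝕜 N₃] [AddCommGroup N₄] [Module 𝕜 N₄] {k l p : ℕ}

theorem inv_factorial_smul_alternatization (a : M [⋀^Fin k]→ₗ[𝕜] N) :
    (k ! : 𝕜)⁻¹ • MultilinearMap.alternatization (a : MultilinearMap 𝕜 (fun _ => M) N) = a := by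
  rw [coe_alternatization, Fintype.card_fin, ← Nat.cast_smul_eq_nsmul 𝕜,
    inv_smul_smul₀ (Nat.cast_ne_zero.mpr k.factorial_ne_zero)]

theorem finCoprod_eq_smul_alternatization (β : N₁ →ₗ[𝕜] N₂ →ₗ[𝕜] N)
    (a : M [⋀^Fin k]→ₗ[𝕜] N₁) (b : M [⋀^Fin l]→ₗ[𝕜] N₂) :
    finCoprod β a b = (k ! * l ! : 𝕜)⁻¹ • MultilinearMap.alternatization
      (MultilinearMap.finCoprod β (a : MultilinearMap 𝕜 (fun _ => M) N₁) b) := by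
  conv_lhs => rw [← inv_factorial_smul_alternatization a, ← inv_factorial_smul_alternatization b]
  rw [finCoprod_smul_smul, finCoprod_alternatization, mul_inv]

theorem finCoprod_finCoprod_left (β : N₃ →ₗ[𝕜] N₄ →ₗ[𝕜] N) (γ : N₁ →ₗ[𝕜] N₂ →ₗ[𝕜] N₃)
    (a : M [⋀^Fin k]→ₗ[𝕜] N₁) (b : M [⋀^Fin l]→ₗ[𝕜] N₂) (c : M [⋀^Fin p]→ₗ[𝕜] N₄) :
    finCoprod β (finCoprod γ a b) c = (k ! * l ! * p ! : 𝕜)⁻¹ •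
      MultilinearMap.alternatization (MultilinearMap.finCoprod β
        (MultilinearMap.finCoprod γ (a : MultilinearMap 𝕜 (fun _ => M) N₁) b) c) := by
  conv_lhs => rw [finCoprod_eq_smul_alternatization γ, ← inv_factorial_smul_alternatization c]
  rw [finCoprod_smul_smul, finCoprod_alternatization, mul_inv (_ * _ : 𝕜)]

theorem finCoprod_finCoprod_right (β : N₁ →ₗ[𝕜] N₃ →ₗ[𝕜] N) (γ : N₂ →ₗ[𝕜] N₄ →ₗ[𝕜] N₃)
    (a : M [⋀^Fin k]→ₗ[𝕜] N₁) (b : M [⋀^Fin l]→ₗ[𝕜] N₂) (c : M [⋀^Fin p]→ₗ[𝕜] N₄) :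
    finCoprod β a (finCoprod γ b c) = (k ! * l ! * p ! : 𝕜)⁻¹ •
      MultilinearMap.alternatization (MultilinearMap.finCoprod β
        (a : MultilinearMap 𝕜 (fun _ => M) N₁)
        (MultilinearMap.finCoprod γ (b : MultilinearMap 𝕜 (fun _ => M) N₂) c)) := by
  conv_lhs => rw [finCoprod_eq_smul_alternatization γ, ← inv_factorial_smul_alternatization a]
  rw [finCoprod_smul_smul, finCoprod_alternatization, mul_assoc, mul_inv (k ! : 𝕜)]

theorem finCoprod_finCoprod_add_smul_finCoprod_finCoprod_eq_zero (β : N →ₗ[𝕜] N →ₗ[𝕜] N₁)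
    (γ : N →ₗ[𝕜] N →ₗ[𝕜] N) (hβγ : ∀ ξ η ω, β (γ ξ η) ω + β η (γ ξ ω) = 0)
    (u : M [⋀^Fin k]→ₗ[𝕜] N) (v : M [⋀^Fin l]→ₗ[𝕜] N) (w : M [⋀^Fin p]→ₗ[𝕜] N) :
    finCoprod β (finCoprod γ u v) w + ((-1 : 𝕜) ^ (k * l)) •
      (finCoprod β v (finCoprod γ u w)).domDomCongr (finAddLeftComm k l p) = 0 := by
  rw [finCoprod_finCoprod_left, finCoprod_finCoprod_right, domDomCongr_smul,
    ← MultilinearMap.alternatization_domDomCongr,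
    MultilinearMap.finCoprod_finCoprod_domDomCongr β γ hβγ, map_neg,
    MultilinearMap.alternatization_domDomCongr, domDomCongr_perm, sign_finSwapFirstBlocks]
  have hsign : (-1 : 𝕜) ^ (k * l) * (((-1 : ℤˣ) ^ (k * l) : ℤˣ) : ℤ) = 1 := by
    push_cast
    rw [← mul_pow, neg_one_mul, neg_neg, one_pow]
  rw [Units.smul_def, ← Int.cast_smul_eq_zsmul 𝕜, smul_neg, smul_neg, smul_smul, smul_smul,
    mul_right_comm ((-1 : 𝕜) ^ (k * l)), hsign, one_mul, mul_comm (l ! : 𝕜), add_neg_cancel]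

end CharZero

end AlternatingMap

/-- For an invariant bilinear form `B`, the identity
`⟨[u ∧ v] ∧ w⟩ + (-1)^(k*l) ⟨v ∧ [u ∧ w]⟩ = 0` holds, with all index types
identified with `Fin (k + l + p)` along the canonical equivalences. -/
theorem pwedge_bwedge_invariance {V g : Type*} [AddCommGroup V] [Module ℝ V]
    [LieRing g] [LieAlgebra ℝ g]
    (B : g →ₗ[ℝ] g →ₗ[ℝ] ℝ)
    (hB : ∀ ξ η ω : g, B ⁅ξ, η⁆ ω + B η ⁅ξ, ω⁆ = 0) {k l p : ℕ}
    (u : AlternatingMap ℝ V g (Fin k)) (v : AlternatingMap ℝ V g (Fin l))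
    (w : AlternatingMap ℝ V g (Fin p)) :
    pwedge B (bwedge u v) w +
      ((-1 : ℝ) ^ (k * l)) •
        ((pwedge B v (bwedge u w)).domDomCongr
          (finCongr (by omega : l + (k + p) = k + l + p))) = 0 := by
  exact AlternatingMap.finCoprod_finCoprod_add_smul_finCoprod_finCoprod_eq_zero
    B (bracketBilin g) hB u v w
end

section
/- Let V be a finite-dimensional real vector space, g a real Lie algebra, and k, l natural numbers. For every alternating 1-linear map A, alternating k-linear map u, and alternating l-linear map v from V to g, the Leibniz-type identity [A ∧ [u ∧ v]] = [[A ∧ u] ∧ v] + (−1)^k [u ∧ [A ∧ v]] holds as an equality of alternating (1+k+l)-linear maps from V to g, with all index types identified along the canonical equivalences. -/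
open scoped TensorProduct

/-!
Over `ℝ` every alternating map is an alternatization, `a = Alt (a / n!)`, and the alternatization
of the pointwise bracket `x ↦ ⁅a (x ∘ inl), b (x ∘ inr)⁆` of two multilinear maps is the
bracket-wedge of their alternatizations. The identity thus reduces to the Jacobi identity
`⁅a, ⁅u, v⁆⁆ = ⁅⁅a, u⁆, v⁆ + ⁅u, ⁅a, v⁆⁆` for multilinear maps, read along the associator and along
the exchange of the first two blocks of slots. On `Fin (1 + k + l)` that exchange is the cycle
moving the slot of `A` past the `k` slots of `u`, of sign `(-1)^k`.
-/

theorem AlternatingMap.exists_alternatization_eq {K M N ι : Type*} [Field K] [CharZero K]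
    [AddCommGroup M] [Module K M] [AddCommGroup N] [Module K N] [Fintype ι] [DecidableEq ι]
    (a : M [⋀^ι]→ₗ[K] N) :
    ∃ m : MultilinearMap K (fun _ : ι => M) N, m.alternatization = a := by
  refine ⟨↑(((Fintype.card ι).factorial : K)⁻¹ • a), ?_⟩
  rw [AlternatingMap.coe_alternatization, ← Nat.cast_smul_eq_nsmul K, smul_smul,
    mul_inv_cancel₀ (Nat.cast_ne_zero.mpr (Nat.factorial_ne_zero _)), one_smul]

theorem MultilinearMap.alternatization_domDomCongr_s11 {R M N ι κ : Type*} [CommSemiring R]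
    [AddCommGroup M] [Module R M] [AddCommGroup N] [Module R N]
    [Fintype ι] [DecidableEq ι] [Fintype κ] [DecidableEq κ]
    (e : ι ≃ κ) (m : MultilinearMap R (fun _ : ι => M) N) :
    (m.domDomCongr e).alternatization = m.alternatization.domDomCongr e := by
  ext x
  rw [MultilinearMap.alternatization_apply, AlternatingMap.domDomCongr_apply,
    MultilinearMap.alternatization_apply]
  refine (Fintype.sum_equiv e.permCongr _ _ fun τ => ?_).symm
  simp only [MultilinearMap.domDomCongr_apply, Equiv.Perm.sign_permCongr,
    Equiv.permCongr_apply, Equiv.symm_apply_apply, Function.comp_apply]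

def Equiv.sumLeftComm (α β γ : Type*) : α ⊕ (β ⊕ γ) ≃ β ⊕ (α ⊕ γ) :=
  (Equiv.sumAssoc α β γ).symm.trans
    (((Equiv.sumComm α β).sumCongr (Equiv.refl γ)).trans (Equiv.sumAssoc β α γ))

@[simp]
theorem Equiv.sumLeftComm_apply_inl {α β γ : Type*} (a : α) :
    Equiv.sumLeftComm α β γ (.inl a) = .inr (.inl a) := rfl

@[simp]
theorem Equiv.sumLeftComm_apply_inr_inl {α β γ : Type*} (b : β) :
    Equiv.sumLeftComm α β γ (.inr (.inl b)) = .inl b := rfl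

@[simp]
theorem Equiv.sumLeftComm_apply_inr_inr {α β γ : Type*} (c : γ) :
    Equiv.sumLeftComm α β γ (.inr (.inr c)) = .inr (.inr c) := rfl

section BracketWedge

variable {V g : Type*} [AddCommGroup V] [Module ℝ V] [LieRing g] [LieAlgebra ℝ g]
  {ι₀ ι₁ ι₂ κ₁ κ₂ : Type*}

noncomputable def bracketProd (a : MultilinearMap ℝ (fun _ : ι₁ => V) g)
    (b : MultilinearMap ℝ (fun _ : ι₂ => V) g) : MultilinearMap ℝ (fun _ : ι₁ ⊕ ι₂ => V) g :=
  (TensorProduct.lift (bracketBilin g)).compMultilinearMap (a.domCoprod b)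

@[simp]
theorem bracketProd_apply (a : MultilinearMap ℝ (fun _ : ι₁ => V) g)
    (b : MultilinearMap ℝ (fun _ : ι₂ => V) g) (x : ι₁ ⊕ ι₂ → V) :
    bracketProd a b x = ⁅a (fun i => x (.inl i)), b (fun i => x (.inr i))⁆ :=
  rfl

theorem bracketProd_leibniz (a : MultilinearMap ℝ (fun _ : ι₀ => V) g)
    (u : MultilinearMap ℝ (fun _ : ι₁ => V) g) (v : MultilinearMap ℝ (fun _ : ι₂ => V) g) :
    bracketProd a (bracketProd u v) =
      (bracketProd (bracketProd a u) v).domDomCongr (Equiv.sumAssoc ι₀ ι₁ ι₂) +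
        (bracketProd u (bracketProd a v)).domDomCongr (Equiv.sumLeftComm ι₁ ι₀ ι₂) := by
  ext x
  simp only [add_apply, MultilinearMap.domDomCongr_apply, bracketProd_apply,
    Equiv.sumAssoc_apply_inl_inl, Equiv.sumAssoc_apply_inl_inr, Equiv.sumAssoc_apply_inr,
    Equiv.sumLeftComm_apply_inl, Equiv.sumLeftComm_apply_inr_inl,
    Equiv.sumLeftComm_apply_inr_inr]
  exact leibniz_lie _ _ _

variable [Fintype ι₀] [DecidableEq ι₀] [Fintype ι₁] [DecidableEq ι₁]
  [Fintype ι₂] [DecidableEq ι₂] [Fintype κ₁] [DecidableEq κ₁] [Fintype κ₂] [DecidableEq κ₂]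

noncomputable def bwedgeSum (a : AlternatingMap ℝ V g ι₁) (b : AlternatingMap ℝ V g ι₂) :
    AlternatingMap ℝ V g (ι₁ ⊕ ι₂) :=
  (TensorProduct.lift (bracketBilin g)).compAlternatingMap (a.domCoprod b)

theorem bwedge_eq_domDomCongr_bwedgeSum {k l : ℕ} (u : AlternatingMap ℝ V g (Fin k))
    (v : AlternatingMap ℝ V g (Fin l)) :
    bwedge u v = (bwedgeSum u v).domDomCongr finSumFinEquiv :=
  rfl

theorem alternatization_bracketProd (a : MultilinearMap ℝ (fun _ : ι₁ => V) g)
    (b : MultilinearMap ℝ (fun _ : ι₂ => V) g) :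
    (bracketProd a b).alternatization = bwedgeSum a.alternatization b.alternatization := by
  rw [bracketProd, LinearMap.compMultilinearMap_alternatization,
    MultilinearMap.domCoprod_alternization]
  rfl

theorem bwedgeSum_domDomCongr (a : AlternatingMap ℝ V g ι₁) (b : AlternatingMap ℝ V g ι₂)
    (e₁ : ι₁ ≃ κ₁) (e₂ : ι₂ ≃ κ₂) :
    bwedgeSum (a.domDomCongr e₁) (b.domDomCongr e₂) =
      (bwedgeSum a b).domDomCongr (e₁.sumCongr e₂) := by
  obtain ⟨a, rfl⟩ := a.exists_alternatization_eq
  obtain ⟨b, rfl⟩ := b.exists_alternatization_eq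
  simp only [← MultilinearMap.alternatization_domDomCongr_s11, ← alternatization_bracketProd]
  rfl

theorem bwedgeSum_domDomCongr_left (a : AlternatingMap ℝ V g ι₁) (b : AlternatingMap ℝ V g ι₂)
    (e : ι₁ ≃ κ₁) :
    bwedgeSum (a.domDomCongr e) b = (bwedgeSum a b).domDomCongr (e.sumCongr (Equiv.refl ι₂)) :=
  bwedgeSum_domDomCongr a b e (Equiv.refl ι₂)

theorem bwedgeSum_domDomCongr_right (a : AlternatingMap ℝ V g ι₁) (b : AlternatingMap ℝ V g ι₂)
    (e : ι₂ ≃ κ₂) :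
    bwedgeSum a (b.domDomCongr e) = (bwedgeSum a b).domDomCongr ((Equiv.refl ι₁).sumCongr e) :=
  bwedgeSum_domDomCongr a b (Equiv.refl ι₁) e

theorem bwedgeSum_leibniz (a : AlternatingMap ℝ V g ι₀) (u : AlternatingMap ℝ V g ι₁)
    (v : AlternatingMap ℝ V g ι₂) :
    bwedgeSum a (bwedgeSum u v) =
      (bwedgeSum (bwedgeSum a u) v).domDomCongr (Equiv.sumAssoc ι₀ ι₁ ι₂) +
        (bwedgeSum u (bwedgeSum a v)).domDomCongr (Equiv.sumLeftComm ι₁ ι₀ ι₂) := by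
  obtain ⟨a, rfl⟩ := a.exists_alternatization_eq
  obtain ⟨u, rfl⟩ := u.exists_alternatization_eq
  obtain ⟨v, rfl⟩ := v.exists_alternatization_eq
  rw [← alternatization_bracketProd u, ← alternatization_bracketProd a, bracketProd_leibniz]
  simp only [map_add, MultilinearMap.alternatization_domDomCongr_s11, alternatization_bracketProd]

end BracketWedge

theorem finSumFinEquiv_sumAssoc (k m n : ℕ) :
    (Equiv.sumAssoc (Fin k) (Fin m) (Fin n)).trans
        (((Equiv.refl (Fin k)).sumCongr finSumFinEquiv).trans
          (finSumFinEquiv.trans (finCongr (Nat.add_assoc k m n).symm))) =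
      (finSumFinEquiv.sumCongr (Equiv.refl (Fin n))).trans finSumFinEquiv := by
  ext (⟨i | i⟩ | i) <;> simp [Nat.add_assoc]

theorem finSumFinEquiv_sumLeftComm (k n : ℕ) :
    (Equiv.sumLeftComm (Fin k) (Fin 1) (Fin n)).trans
        (((Equiv.refl (Fin 1)).sumCongr finSumFinEquiv).trans
          (finSumFinEquiv.trans (finCongr (Nat.add_assoc 1 k n).symm))) =
      (((Equiv.refl (Fin k)).sumCongr finSumFinEquiv).trans
        (finSumFinEquiv.trans
          (finCongr ((Nat.add_left_comm k 1 n).trans (Nat.add_assoc 1 k n).symm)))).trans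
        (Fin.cycleRange ⟨k, by omega⟩) := by
  ext (i | i | i) <;>
    simp only [Equiv.trans_apply, Equiv.sumLeftComm_apply_inl, Equiv.sumLeftComm_apply_inr_inl,
      Equiv.sumLeftComm_apply_inr_inr, Equiv.sumCongr_apply, Sum.map_inl, Sum.map_inr,
      Equiv.coe_refl, id_eq, finSumFinEquiv_apply_left, finSumFinEquiv_apply_right,
      finCongr_apply, Fin.val_cast, Fin.val_natAdd, Fin.val_castAdd]
  · rw [Fin.coe_cycleRange_of_lt (by simp [Fin.lt_def])]
    simp only [Fin.val_cast, Fin.val_castAdd]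
    omega
  · rw [Fin.coe_cycleRange_of_le (by simp [Fin.le_def]), if_pos (by simp [Fin.ext_iff])]
    omega
  · rw [Fin.cycleRange_of_gt (by simp [Fin.lt_def])]
    simp only [Fin.val_cast, Fin.val_natAdd]
    omega

/-- The Leibniz-type identity
`[A ∧ [u ∧ v]] = [[A ∧ u] ∧ v] + (-1)^k [u ∧ [A ∧ v]]` for a `g`-valued 1-form `A`,
`k`-form `u`, and `l`-form `v`, with all index types identified with `Fin (1 + k + l)`
along the canonical equivalences. -/
theorem bwedge_leibniz {V g : Type*} [AddCommGroup V] [Module ℝ V]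
    [LieRing g] [LieAlgebra ℝ g] {k l : ℕ}
    (A : AlternatingMap ℝ V g (Fin 1)) (u : AlternatingMap ℝ V g (Fin k))
    (v : AlternatingMap ℝ V g (Fin l)) :
    (bwedge A (bwedge u v)).domDomCongr
        (finCongr (by omega : 1 + (k + l) = 1 + k + l)) =
      bwedge (bwedge A u) v +
        ((-1 : ℝ) ^ k) • ((bwedge u (bwedge A v)).domDomCongr
          (finCongr (by omega : k + (1 + l) = 1 + k + l))) := by
  simp only [bwedge_eq_domDomCongr_bwedgeSum, bwedgeSum_domDomCongr_left,
    bwedgeSum_domDomCongr_right]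
  rw [bwedgeSum_leibniz]
  simp only [AlternatingMap.domDomCongr_add, ← AlternatingMap.domDomCongr_trans, Equiv.trans_assoc]
  rw [finSumFinEquiv_sumAssoc, finSumFinEquiv_sumLeftComm,
    AlternatingMap.domDomCongr_trans _ (Fin.cycleRange _), AlternatingMap.domDomCongr_perm,
    Fin.sign_cycleRange, Fin.val_mk, Units.smul_def, Units.val_pow_eq_pow_val, Units.val_neg,
    Units.val_one, ← Int.cast_smul_eq_zsmul ℝ, Int.cast_pow, Int.cast_neg, Int.cast_one]
end
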